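/- The function G(K) = sup_{α,β ∈ R^n} ⟨α,a⟩ + ⟨β,b⟩ - ε⟨e^{α/ε}, K e^{β/ε}⟩ is convex and differentiable on the open set of entrywise positive n×m matrices, with gradient ∇G(K) = -ε·e^{α*/ε}(e^{β*/ε})^T where (α*, β*) is any optimal dual solution. -/

import Mathlib

/-!
For any positive coupling `w` of `a` and `b`, the dual objective equals
`∑ᵢⱼ (αᵢ + βⱼ) wᵢⱼ - ε e^{αᵢ/ε} Kᵢⱼ e^{βⱼ/ε}`, and Fenchel–Young for `exp` bounds it termwise by the
entropic primal objective `Ψ_w(K) = ε ∑ᵢⱼ wᵢⱼ (log wᵢⱼ - log Kᵢⱼ - 1)`. Hence `G` is finite, and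
as a supremum of affine functions of `K` it is convex. At a maximiser `(α*, β*)` the first-order
conditions say that `w* = e^{α*/ε} K e^{β*/ε}` is itself a coupling, and then `Ψ_{w*}(K) = G(K)`.
Near `K`, `G` is thus squeezed between the affine minorant `F(·, α*, β*)` and the smooth
majorant `Ψ_{w*}`, which touch it at `K` with the same derivative `-ε e^{α*/ε} (e^{β*/ε})ᵀ`.
-/

open Real Filter Topology

-- Fenchel–Young for the conjugate pair `exp` and `x log x - x`.
lemma mul_sub_mul_exp_le {ε x k : ℝ} (hε : 0 < ε) (hx : 0 < x) (hk : 0 < k) (s : ℝ) :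
    s * x - ε * (k * exp (s / ε)) ≤ ε * x * (log x - log k - 1) := by
  have key : x * (log k + s / ε - log x + 1) ≤ k * exp (s / ε) :=
    calc x * (log k + s / ε - log x + 1) ≤ x * exp (log k + s / ε - log x) :=
          mul_le_mul_of_nonneg_left (add_one_le_exp _) hx.le
      _ = k * exp (s / ε) := by
          rw [exp_sub, exp_add, exp_log hk, exp_log hx]
          field_simp
  calc s * x - ε * (k * exp (s / ε)) ≤ s * x - ε * (x * (log k + s / ε - log x + 1)) := by
        gcongr
    _ = ε * x * (log x - log k - 1) := by
        field_simp
        ring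

lemma eq_mul_exp_of_forall_le {A c ε t₀ : ℝ} (hε : ε ≠ 0)
    (h : ∀ t, t * A - ε * c * exp (t / ε) ≤ t₀ * A - ε * c * exp (t₀ / ε)) :
    A = c * exp (t₀ / ε) := by
  have hderiv : HasDerivAt (fun t => t * A - ε * c * exp (t / ε))
      (A - c * exp (t₀ / ε)) t₀ := by
    refine (((hasDerivAt_id' t₀).mul_const A).sub
      (((hasDerivAt_id' t₀).div_const ε).exp.const_mul (ε * c))).congr_deriv ?_
    field_simp
  have := (IsLocalMax.hasDerivAt_eq_zero (Eventually.of_forall h) hderiv)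
  linarith

lemma convexOn_ciSup {E ι : Type*} [AddCommMonoid E] [Module ℝ E] [Nonempty ι] {s : Set E}
    {f : ι → E → ℝ} (hf : ∀ i, ConvexOn ℝ s (f i))
    (hbdd : ∀ x ∈ s, BddAbove (Set.range fun i => f i x)) (hs : Convex ℝ s) :
    ConvexOn ℝ s fun x => ⨆ i, f i x := by
  refine ⟨hs, fun x hx y hy t u ht hu htu => ciSup_le fun i => ?_⟩
  calc f i (t • x + u • y) ≤ t • f i x + u • f i y := (hf i).2 hx hy ht hu htu
    _ ≤ t • (⨆ k, f k x) + u • ⨆ k, f k y :=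
        add_le_add (smul_le_smul_of_nonneg_left (le_ciSup (hbdd x hx) i) ht)
          (smul_le_smul_of_nonneg_left (le_ciSup (hbdd y hy) i) hu)

theorem HasFDerivAt.of_affine_le_of_le {E : Type*} [NormedAddCommGroup E] [NormedSpace ℝ E]
    {g h : E → ℝ} {g' : E →L[ℝ] ℝ} {x : E} (hh : HasFDerivAt h g' x)
    (hlow : ∀ᶠ y in 𝓝 x, g x + g' (y - x) ≤ g y) (hup : ∀ᶠ y in 𝓝 x, g y ≤ h y)
    (hx : g x = h x) : HasFDerivAt g g' x := by
  refine .of_isLittleO <| Asymptotics.IsBigO.trans_isLittleO ?_ hh.isLittleO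
  refine Asymptotics.IsBigO.of_bound 1 ?_
  filter_upwards [hlow, hup] with y hly huy
  rw [Real.norm_eq_abs, Real.norm_eq_abs, one_mul, abs_of_nonneg (by linarith),
    abs_of_nonneg (by linarith)]
  linarith

noncomputable section EntropicOT

variable {ι κ : Type*} [Fintype ι] [Fintype κ]

def entropicDual (ε : ℝ) (a : ι → ℝ) (b : κ → ℝ) (K : ι → κ → ℝ) (α : ι → ℝ) (β : κ → ℝ) : ℝ :=
  ∑ i, α i * a i + ∑ j, β j * b j - ε * ∑ i, ∑ j, exp (α i / ε) * K i j * exp (β j / ε)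

def entropicDualValue (ε : ℝ) (a : ι → ℝ) (b : κ → ℝ) (K : ι → κ → ℝ) : ℝ :=
  ⨆ p : (ι → ℝ) × (κ → ℝ), entropicDual ε a b K p.1 p.2

-- For the cost `C = -ε log K` this is the entropic primal objective `⟨w, C⟩ + ε ∑ w (log w - 1)`.
def entropicPrimal (ε : ℝ) (K w : ι → κ → ℝ) : ℝ :=
  ∑ i, ∑ j, ε * w i j * (log (w i j) - log (K i j) - 1)

def scaledKernel (ε : ℝ) (K : ι → κ → ℝ) (α : ι → ℝ) (β : κ → ℝ) (i : ι) (j : κ) : ℝ :=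
  exp (α i / ε) * K i j * exp (β j / ε)

def IsCoupling (a : ι → ℝ) (b : κ → ℝ) (w : ι → κ → ℝ) : Prop :=
  (∀ i, ∑ j, w i j = a i) ∧ ∀ j, ∑ i, w i j = b j

def entryCLM (i : ι) (j : κ) : (ι → κ → ℝ) →L[ℝ] ℝ :=
  ContinuousLinearMap.proj (R := ℝ) (φ := fun _ : κ => ℝ) j ∘L
    ContinuousLinearMap.proj (R := ℝ) (φ := fun _ : ι => κ → ℝ) i

def entrywisePairing (c : ι → κ → ℝ) : (ι → κ → ℝ) →L[ℝ] ℝ :=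
  ∑ i, ∑ j, c i j • entryCLM i j

omit [Fintype ι] [Fintype κ] in
lemma scaledKernel_eq (ε : ℝ) (K : ι → κ → ℝ) (α : ι → ℝ) (β : κ → ℝ) (i : ι) (j : κ) :
    scaledKernel ε K α β i j = K i j * exp ((α i + β j) / ε) := by
  rw [scaledKernel, add_div, exp_add]
  ring

lemma entrywisePairing_apply (c H : ι → κ → ℝ) :
    entrywisePairing c H = ∑ i, ∑ j, c i j * H i j := by
  simp [entrywisePairing, entryCLM]

lemma entropicDual_eq_sum_of_isCoupling {ε : ℝ} {a : ι → ℝ} {b : κ → ℝ} {w : ι → κ → ℝ}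
    (hw : IsCoupling a b w) (K : ι → κ → ℝ) (α : ι → ℝ) (β : κ → ℝ) :
    entropicDual ε a b K α β =
      ∑ i, ∑ j, ((α i + β j) * w i j - ε * scaledKernel ε K α β i j) := by
  have hα : ∑ i, α i * a i = ∑ i, ∑ j, α i * w i j := by
    simp_rw [← hw.1, Finset.mul_sum]
  have hβ : ∑ j, β j * b j = ∑ i, ∑ j, β j * w i j := by
    rw [Finset.sum_comm]
    simp_rw [← hw.2, Finset.mul_sum]
  rw [entropicDual, hα, hβ, Finset.mul_sum]
  simp_rw [Finset.mul_sum, ← Finset.sum_add_distrib, ← Finset.sum_sub_distrib, add_mul,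
    scaledKernel]

theorem entropicDual_le_entropicPrimal {ε : ℝ} (hε : 0 < ε) {a : ι → ℝ} {b : κ → ℝ}
    {w K : ι → κ → ℝ} (hw : IsCoupling a b w) (hw_pos : ∀ i j, 0 < w i j)
    (hK : ∀ i j, 0 < K i j) (α : ι → ℝ) (β : κ → ℝ) :
    entropicDual ε a b K α β ≤ entropicPrimal ε K w := by
  rw [entropicDual_eq_sum_of_isCoupling hw, entropicPrimal]
  gcongr with i _ j _
  rw [scaledKernel_eq]
  exact mul_sub_mul_exp_le hε (hw_pos i j) (hK i j) _

theorem entropicPrimal_scaledKernel {ε : ℝ} (hε : ε ≠ 0) {a : ι → ℝ} {b : κ → ℝ}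
    {K : ι → κ → ℝ} (hK : ∀ i j, 0 < K i j) {α : ι → ℝ} {β : κ → ℝ}
    (hw : IsCoupling a b (scaledKernel ε K α β)) :
    entropicPrimal ε K (scaledKernel ε K α β) = entropicDual ε a b K α β := by
  rw [entropicDual_eq_sum_of_isCoupling hw, entropicPrimal]
  refine Finset.sum_congr rfl fun i _ => Finset.sum_congr rfl fun j _ => ?_
  rw [scaledKernel_eq, log_mul (hK i j).ne' (exp_ne_zero _), log_exp]
  field_simp
  ring

lemma isCoupling_mul {a : ι → ℝ} {b : κ → ℝ} (ha1 : ∑ i, a i = 1) (hb1 : ∑ j, b j = 1) :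
    IsCoupling a b fun i j => a i * b j :=
  ⟨fun i => by rw [← Finset.mul_sum, hb1, mul_one], fun j => by rw [← Finset.sum_mul, ha1, one_mul]⟩

theorem bddAbove_range_entropicDual {ε : ℝ} (hε : 0 < ε) {a : ι → ℝ} {b : κ → ℝ}
    {w K : ι → κ → ℝ} (hw : IsCoupling a b w) (hw_pos : ∀ i j, 0 < w i j)
    (hK : ∀ i j, 0 < K i j) :
    BddAbove (Set.range fun p : (ι → ℝ) × (κ → ℝ) => entropicDual ε a b K p.1 p.2) :=
  ⟨entropicPrimal ε K w, Set.forall_mem_range.2 fun p =>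
    entropicDual_le_entropicPrimal hε hw hw_pos hK p.1 p.2⟩

lemma entropicDual_eq_entrywisePairing_add (ε : ℝ) (a : ι → ℝ) (b : κ → ℝ) (K : ι → κ → ℝ)
    (α : ι → ℝ) (β : κ → ℝ) :
    entropicDual ε a b K α β =
      entrywisePairing (fun i j => -(ε * exp (α i / ε) * exp (β j / ε))) K +
        entropicDual ε a b 0 α β := by
  simp only [entropicDual, entrywisePairing_apply, Pi.zero_apply, mul_zero, zero_mul,
    Finset.sum_const_zero, neg_zero, add_zero, sub_eq_add_neg, Finset.mul_sum,
    ← Finset.sum_neg_distrib]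
  rw [add_comm]
  congr 1
  refine Finset.sum_congr rfl fun i _ => Finset.sum_congr rfl fun j _ => ?_
  ring

omit [Fintype ι] [Fintype κ] in
lemma convex_setOf_forall_pos : Convex ℝ {K : ι → κ → ℝ | ∀ i j, 0 < K i j} :=
  fun _ hK _ hL _ _ ht hu htu i j => (convex_Ioi (0 : ℝ)) (hK i j) (hL i j) ht hu htu

theorem convexOn_entropicDualValue {ε : ℝ} (hε : 0 < ε) {a : ι → ℝ} {b : κ → ℝ}
    {w : ι → κ → ℝ} (hw : IsCoupling a b w) (hw_pos : ∀ i j, 0 < w i j) :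
    ConvexOn ℝ {K : ι → κ → ℝ | ∀ i j, 0 < K i j} (entropicDualValue ε a b) := by
  refine convexOn_ciSup (fun p => ?_) (fun K hK => bddAbove_range_entropicDual hε hw hw_pos hK)
    convex_setOf_forall_pos
  rw [funext fun K => entropicDual_eq_entrywisePairing_add ε a b K p.1 p.2]
  exact ((entrywisePairing _).toLinearMap.convexOn convex_setOf_forall_pos).add_const _

lemma entropicDual_eq_sum_rows (ε : ℝ) (a : ι → ℝ) (b : κ → ℝ) (K : ι → κ → ℝ)
    (α : ι → ℝ) (β : κ → ℝ) :
    entropicDual ε a b K α β =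
      ∑ i, (α i * a i - ε * (∑ j, K i j * exp (β j / ε)) * exp (α i / ε)) +
        ∑ j, β j * b j := by
  have hrow : ∀ i, ε * (∑ j, K i j * exp (β j / ε)) * exp (α i / ε) =
      ε * ∑ j, exp (α i / ε) * K i j * exp (β j / ε) := fun i => by
    rw [mul_assoc, Finset.sum_mul]
    exact congrArg _ (Finset.sum_congr rfl fun j _ => by ring)
  simp only [hrow, Finset.sum_sub_distrib, ← Finset.mul_sum, entropicDual]
  ring

omit [Fintype ι] [Fintype κ] in
lemma scaledKernel_transpose (ε : ℝ) (K : ι → κ → ℝ) (α : ι → ℝ) (β : κ → ℝ) (i : ι) (j : κ) :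
    scaledKernel ε (fun j i => K i j) β α j i = scaledKernel ε K α β i j := by
  rw [scaledKernel, scaledKernel]
  ring

lemma entropicDual_transpose (ε : ℝ) (a : ι → ℝ) (b : κ → ℝ) (K : ι → κ → ℝ)
    (α : ι → ℝ) (β : κ → ℝ) :
    entropicDual ε b a (fun j i => K i j) β α = entropicDual ε a b K α β := by
  have hswap : ∑ j, ∑ i, exp (β j / ε) * K i j * exp (α i / ε) =
      ∑ i, ∑ j, exp (α i / ε) * K i j * exp (β j / ε) := by
    rw [Finset.sum_comm]
    exact Finset.sum_congr rfl fun i _ => Finset.sum_congr rfl fun j _ => by ring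
  rw [entropicDual, entropicDual, hswap]
  ring

theorem sum_scaledKernel_eq_of_forall_le {ε : ℝ} (hε : ε ≠ 0) {a : ι → ℝ} {b : κ → ℝ}
    {K : ι → κ → ℝ} {αs : ι → ℝ} {β : κ → ℝ}
    (hmax : ∀ α, entropicDual ε a b K α β ≤ entropicDual ε a b K αs β) (i : ι) :
    ∑ j, scaledKernel ε K αs β i j = a i := by
  classical
  set c : ι → ℝ := fun i => ∑ j, K i j * exp (β j / ε)
  set φ : ι → ℝ → ℝ := fun i t => t * a i - ε * c i * exp (t / ε)
  have hφ : ∀ α, entropicDual ε a b K α β = ∑ i', φ i' (α i') + ∑ j, β j * b j :=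
    fun α => entropicDual_eq_sum_rows ε a b K α β
  have hstat : a i = c i * exp (αs i / ε) := by
    refine eq_mul_exp_of_forall_le hε fun t => ?_
    have h := hmax (Function.update αs i t)
    rw [hφ, hφ,
      Finset.sum_eq_add_sum_sdiff_singleton_of_mem (Finset.mem_univ i) (fun i' => φ i' (αs i')),
      Finset.sum_congr rfl fun i' _ => Function.apply_update φ αs i t i',
      Finset.sum_update_of_mem (Finset.mem_univ i)] at h
    simpa [φ] using h
  rw [hstat]
  simp only [c, Finset.sum_mul, scaledKernel]
  exact Finset.sum_congr rfl fun j _ => by ring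

theorem isCoupling_scaledKernel_of_forall_le {ε : ℝ} (hε : ε ≠ 0) {a : ι → ℝ} {b : κ → ℝ}
    {K : ι → κ → ℝ} {αs : ι → ℝ} {βs : κ → ℝ}
    (hmax : ∀ α β, entropicDual ε a b K α β ≤ entropicDual ε a b K αs βs) :
    IsCoupling a b (scaledKernel ε K αs βs) := by
  refine ⟨sum_scaledKernel_eq_of_forall_le hε fun α => hmax α βs, fun j => ?_⟩
  have hmax_transpose : ∀ β, entropicDual ε b a (fun j i => K i j) β αs ≤
      entropicDual ε b a (fun j i => K i j) βs αs := fun β => by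
    simpa only [entropicDual_transpose] using hmax αs β
  simpa only [scaledKernel_transpose] using sum_scaledKernel_eq_of_forall_le hε hmax_transpose j

theorem hasFDerivAt_entropicPrimal (ε : ℝ) (w : ι → κ → ℝ) {K : ι → κ → ℝ}
    (hK : ∀ i j, 0 < K i j) :
    HasFDerivAt (fun K => entropicPrimal ε K w)
      (entrywisePairing fun i j => -(ε * w i j / K i j)) K := by
  refine HasFDerivAt.fun_sum fun i _ => HasFDerivAt.fun_sum fun j _ => ?_
  have hlog := (entryCLM i j).hasFDerivAt.log (x := K) (hK i j).ne'
  refine (((hlog.const_sub (log (w i j))).sub_const 1).const_mul (ε * w i j)).congr_fderiv ?_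
  rw [smul_neg, smul_smul, ← neg_smul]
  congr 1

theorem hasFDerivAt_entropicDualValue {ε : ℝ} (hε : 0 < ε) {a : ι → ℝ} {b : κ → ℝ}
    {K : ι → κ → ℝ} (hK : ∀ i j, 0 < K i j) {αs : ι → ℝ} {βs : κ → ℝ}
    (hmax : ∀ α β, entropicDual ε a b K α β ≤ entropicDual ε a b K αs βs) :
    HasFDerivAt (entropicDualValue ε a b)
      (entrywisePairing fun i j => -(ε * exp (αs i / ε) * exp (βs j / ε))) K := by
  set w := scaledKernel ε K αs βs
  have hw : IsCoupling a b w := isCoupling_scaledKernel_of_forall_le hε.ne' hmax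
  have hw_pos : ∀ i j, 0 < w i j := fun i j => by
    have := hK i j
    simp only [w, scaledKernel]
    positivity
  have hbdd {K' : ι → κ → ℝ} (hK' : ∀ i j, 0 < K' i j) :
      BddAbove (Set.range fun p : (ι → ℝ) × (κ → ℝ) => entropicDual ε a b K' p.1 p.2) :=
    bddAbove_range_entropicDual hε hw hw_pos hK'
  have hvalue : entropicDualValue ε a b K = entropicDual ε a b K αs βs := by
    unfold entropicDualValue
    exact le_antisymm (ciSup_le fun p => hmax p.1 p.2) (le_ciSup (hbdd hK) (αs, βs))
  have hderiv := hasFDerivAt_entropicPrimal ε w hK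
  have hgrad : (fun i j => -(ε * w i j / K i j)) =
      fun i j => -(ε * exp (αs i / ε) * exp (βs j / ε)) := by
    ext i j
    simp only [w, scaledKernel]
    field_simp [(hK i j).ne']
  rw [hgrad] at hderiv
  have hpos : ∀ᶠ K' : ι → κ → ℝ in 𝓝 K, ∀ i j, 0 < K' i j :=
    eventually_all.2 fun i => eventually_all.2 fun j =>
      ((continuous_apply_apply i j).tendsto K).eventually_const_lt (hK i j)
  refine HasFDerivAt.of_affine_le_of_le hderiv ?_ ?_
    (hvalue.trans (entropicPrimal_scaledKernel hε.ne' hK hw).symm)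
  · filter_upwards [hpos] with K' hK'
    calc entropicDualValue ε a b K + _ = entropicDual ε a b K' αs βs := by
          rw [hvalue, entropicDual_eq_entrywisePairing_add ε a b K',
            entropicDual_eq_entrywisePairing_add ε a b K, map_sub]
          ring
      _ ≤ entropicDualValue ε a b K' := le_ciSup (hbdd hK') (αs, βs)
  · filter_upwards [hpos] with K' hK'
    exact ciSup_le fun p => entropicDual_le_entropicPrimal hε hw hw_pos hK' p.1 p.2

end EntropicOT

theorem dual_value_convex_differentiable (n m : ℕ) (ε : ℝ) (hε : 0 < ε)
    (a : Fin n → ℝ) (b : Fin m → ℝ)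
    (ha : ∀ i, 0 < a i) (hb : ∀ j, 0 < b j)
    (ha1 : ∑ i, a i = 1) (hb1 : ∑ j, b j = 1)
    (F : (Fin n → Fin m → ℝ) → (Fin n → ℝ) → (Fin m → ℝ) → ℝ)
    (hF : ∀ K α β, F K α β = ∑ i, α i * a i + ∑ j, β j * b j -
      ε * ∑ i, ∑ j, exp (α i / ε) * K i j * exp (β j / ε))
    (G : (Fin n → Fin m → ℝ) → ℝ)
    (hG : ∀ K, G K = ⨆ p : (Fin n → ℝ) × (Fin m → ℝ), F K p.1 p.2) :
    ConvexOn ℝ {K : (Fin n → Fin m → ℝ) | ∀ i j, 0 < K i j} G ∧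
    ∀ K : (Fin n → Fin m → ℝ), (∀ i j, 0 < K i j) →
      ∀ αs : Fin n → ℝ, ∀ βs : Fin m → ℝ,
        (∀ α β, F K α β ≤ F K αs βs) →
        ∃ L : (Fin n → Fin m → ℝ) →L[ℝ] ℝ,
          HasFDerivAt G L K ∧
          ∀ H : (Fin n → Fin m → ℝ),
            L H = -ε * ∑ i, ∑ j, exp (αs i / ε) * exp (βs j / ε) * H i j := by
  obtain rfl : F = entropicDual ε a b := funext fun K => funext fun α => funext (hF K α)
  obtain rfl : G = entropicDualValue ε a b := funext hG
  refine ⟨convexOn_entropicDualValue hε (isCoupling_mul ha1 hb1) fun i j => mul_pos (ha i) (hb j),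
    fun K hK αs βs hmax => ⟨_, hasFDerivAt_entropicDualValue hε hK hmax, fun H => ?_⟩⟩
  rw [entrywisePairing_apply, Finset.mul_sum]
  exact Finset.sum_congr rfl fun i _ => by
    rw [Finset.mul_sum]
    exact Finset.sum_congr rfl fun j _ => by ring
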